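/- arXiv:1706.03158 — 2 statements merged into one kernel-verified Lean document; each statement's English description precedes it below -/
import Mathlib

section
/- Fix γ ∈ (0,1] and let C be a row-stochastic n×n matrix with left Perron vector c, Cᵀc = c, c positive and normalized. Then the map f(p) = (diag(1 − e^{−γp}) + Cᵀ diag(e^{−γp})) p has exactly one fixed point p⋆ in the probability simplex, characterized by p⋆ᵢ e^{−γp⋆ᵢ} = κ cᵢ for a suitable κ > 0. -/
/-!
A vector `p` is a fixed point of `f` exactly when its moving mass `v = p e^{−γp}` is a left
fixed vector of `C`, because `f p = p − v + Cᵀ v`. For irreducible `C` every left fixed vector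
is a multiple `κ c` of the Perron vector: subtracting the largest multiple of `c` lying below `v`
leaves a nonnegative fixed vector with a zero entry, which irreducibility forces to vanish.
Since `x ↦ x e^{−γx}` is strictly increasing on `[0, 1]` for `γ ≤ 1`, the equations
`pᵢ e^{−γpᵢ} = κ cᵢ` determine `p` and make it increasing in `κ`. Two fixed points in the simplex
are therefore comparable and, having the same sum, equal; the intermediate value theorem applied
to the total mass `κ ↦ ∑ᵢ pᵢ(κ)` produces one.
-/

open Matrix Set

theorem StrictMonoOn.exists_continuous_rightInvOn_Icc {α δ : Type*}
    [ConditionallyCompleteLinearOrder α] [TopologicalSpace α] [OrderTopology α] [DenselyOrdered α]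
    [LinearOrder δ] [TopologicalSpace δ] [OrderTopology δ]
    {f : α → δ} {a b : α} (hab : a ≤ b)
    (hf : ContinuousOn f (Icc a b)) (hmono : StrictMonoOn f (Icc a b)) :
    ∃ g : δ → α, Continuous g ∧ (∀ y, g y ∈ Icc a b) ∧ ∀ y ∈ Icc (f a) (f b), f (g y) = y := by
  have ha := left_mem_Icc.2 hab
  have hb := right_mem_Icc.2 hab
  let F : Icc a b → Icc (f a) (f b) := fun x =>
    ⟨f x, hmono.monotoneOn ha x.2 x.2.1, hmono.monotoneOn x.2 hb x.2.2⟩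
  have hFsurj : Function.Surjective F := fun y =>
    let ⟨x, hx, hxy⟩ := intermediate_value_Icc hab hf y.2
    ⟨⟨x, hx⟩, Subtype.ext hxy⟩
  let e := StrictMono.orderIsoOfSurjective F (fun x y hxy => hmono x.2 y.2 hxy) hFsurj
  have hfab : f a ≤ f b := hmono.monotoneOn ha hb hab
  refine ⟨fun y => e.symm (projIcc (f a) (f b) hfab y), ?_, fun y => (e.symm _).2, fun y hy => ?_⟩
  · exact continuous_subtype_val.comp (e.symm.continuous.comp continuous_projIcc)
  · simp only [projIcc_of_mem hfab hy]
    exact congrArg Subtype.val (e.apply_symm_apply ⟨y, hy⟩)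

theorem strictMonoOn_mul_exp_neg_mul {γ : ℝ} (hγ : γ ≤ 1) :
    StrictMonoOn (fun x : ℝ => x * Real.exp (-(γ * x))) (Icc 0 1) := by
  have hderiv (x : ℝ) : HasDerivAt (fun x : ℝ => x * Real.exp (-(γ * x)))
      (Real.exp (-(γ * x)) * (1 - γ * x)) x :=
    ((hasDerivAt_id' x).mul ((hasDerivAt_id' x).const_mul γ).neg.exp).congr_deriv
      (by simp only [Pi.neg_apply]; ring)
  refine strictMonoOn_of_deriv_pos (convex_Icc 0 1) (by fun_prop) fun x hx => ?_
  rw [interior_Icc] at hx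
  rw [(hderiv x).deriv]
  have : γ * x < 1 := by nlinarith [hx.1, hx.2]
  have := Real.exp_pos (-(γ * x))
  nlinarith

namespace Matrix

variable {ι R : Type*} [Fintype ι] [DecidableEq ι]

theorem vecMul_pow_eq_self [Semiring R] {A : Matrix ι ι R} {v : ι → R} (h : v ᵥ* A = v) :
    ∀ m : ℕ, v ᵥ* A ^ m = v
  | 0 => by rw [pow_zero, vecMul_one]
  | m + 1 => by rw [pow_succ, ← vecMul_vecMul, vecMul_pow_eq_self h m, h]

theorem IsIrreducible.eq_zero_of_vecMul_eq_self [Ring R] [LinearOrder R] [IsStrictOrderedRing R]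
    {A : Matrix ι ι R} (hA : A.IsIrreducible) {w : ι → R} (hw : 0 ≤ w) (hwA : w ᵥ* A = w)
    {j : ι} (hj : w j = 0) : w = 0 := by
  funext i
  obtain ⟨m, -, hpos⟩ := (isIrreducible_iff_exists_pow_pos hA.nonneg).1 hA i j
  have hsum : ∑ k, w k * (A ^ m) k j = 0 := (congrFun (vecMul_pow_eq_self hwA m) j).trans hj
  have hterm := (Finset.sum_eq_zero_iff_of_nonneg fun k _ =>
    mul_nonneg (hw k) (pow_apply_nonneg hA.nonneg m k j)).1 hsum i (Finset.mem_univ i)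
  exact (mul_eq_zero.1 hterm).resolve_right hpos.ne'

theorem IsIrreducible.eq_smul_of_vecMul_eq_self [Field R] [LinearOrder R] [IsStrictOrderedRing R]
    {A : Matrix ι ι R} (hA : A.IsIrreducible) {c v : ι → R} (hc : ∀ i, 0 < c i)
    (hcA : c ᵥ* A = c) (hvA : v ᵥ* A = v) : ∃ t : R, v = t • c := by
  cases isEmpty_or_nonempty ι
  · exact ⟨0, Subsingleton.elim _ _⟩
  obtain ⟨j, -, hj⟩ :=
    Finset.exists_min_image Finset.univ (fun i => v i / c i) Finset.univ_nonempty
  refine ⟨v j / c j, sub_eq_zero.1 (hA.eq_zero_of_vecMul_eq_self (fun i => ?_) ?_ (j := j) ?_)⟩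
  · simpa [sub_nonneg, le_div_iff₀ (hc i)] using hj i (Finset.mem_univ i)
  · rw [sub_vecMul, smul_vecMul, hvA, hcA]
  · simp [div_mul_cancel₀ _ (hc j).ne']

end Matrix

noncomputable section

variable {ι : Type*} [Fintype ι]

/-- `stepMap γ C p = (diag(1 − e^{−γp}) + Cᵀ diag(e^{−γp})) p`. -/
def stepMap (γ : ℝ) (C : Matrix ι ι ℝ) (p : ι → ℝ) : ι → ℝ := fun j =>
  (1 - Real.exp (-(γ * p j))) * p j + ∑ i, C i j * (Real.exp (-(γ * p i)) * p i)

def movingMass (γ : ℝ) (p : ι → ℝ) : ι → ℝ := fun i => p i * Real.exp (-(γ * p i))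

theorem stepMap_eq (γ : ℝ) (C : Matrix ι ι ℝ) (p : ι → ℝ) :
    stepMap γ C p = p - movingMass γ p + movingMass γ p ᵥ* C := by
  funext j
  simp only [stepMap, movingMass, Pi.add_apply, Pi.sub_apply, vecMul, dotProduct]
  congr 1
  · ring
  · exact Finset.sum_congr rfl fun i _ => by ring

theorem stepMap_eq_self_iff {γ : ℝ} {C : Matrix ι ι ℝ} {p : ι → ℝ} :
    stepMap γ C p = p ↔ movingMass γ p ᵥ* C = movingMass γ p := by
  rw [stepMap_eq, sub_add_eq_add_sub, sub_eq_iff_eq_add', add_comm (movingMass γ p),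
    add_right_inj]

theorem exists_mem_stdSimplex_movingMass_eq_smul [Nonempty ι] {γ : ℝ} (hγ : γ ≤ 1)
    {c : ι → ℝ} (hc : ∀ i, 0 < c i) :
    ∃ p ∈ stdSimplex ℝ ι, ∃ κ : ℝ, 0 < κ ∧ movingMass γ p = κ • c := by
  set E := Real.exp (-γ)
  have hmono := strictMonoOn_mul_exp_neg_mul hγ
  obtain ⟨g, hg_cont, hg_mem, hg_inv⟩ :=
    hmono.exists_continuous_rightInvOn_Icc zero_le_one (by fun_prop)
  simp only [zero_mul, mul_one, one_mul] at hg_inv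
  have hg0 : g 0 = 0 := hmono.injOn (hg_mem 0) (left_mem_Icc.2 zero_le_one)
    (by simpa using hg_inv 0 ⟨le_rfl, (Real.exp_pos _).le⟩)
  have hgE : g E = 1 := hmono.injOn (hg_mem E) (right_mem_Icc.2 zero_le_one)
    (by simpa using hg_inv E ⟨(Real.exp_pos _).le, le_rfl⟩)
  obtain ⟨i₀, -, hi₀⟩ := Finset.exists_max_image Finset.univ c Finset.univ_nonempty
  have hκmax_pos : 0 < E / c i₀ := div_pos (Real.exp_pos _) (hc i₀)
  have hκmax : E / c i₀ * c i₀ = E := div_mul_cancel₀ _ (hc i₀).ne'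
  have hκc {κ : ℝ} (hκ : κ ∈ Icc 0 (E / c i₀)) (i : ι) : κ * c i ∈ Icc 0 E :=
    ⟨mul_nonneg hκ.1 (hc i).le, hκmax ▸
      mul_le_mul hκ.2 (hi₀ i (Finset.mem_univ i)) (hc i).le hκmax_pos.le⟩
  obtain ⟨κ, hκ, hsum⟩ : ∃ κ ∈ Icc 0 (E / c i₀), ∑ i, g (κ * c i) = 1 := by
    refine intermediate_value_Icc (f := fun κ => ∑ i, g (κ * c i)) hκmax_pos.le
      (by fun_prop) ⟨by simp [hg0], ?_⟩
    calc 1 = g (E / c i₀ * c i₀) := by rw [hκmax, hgE]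
      _ ≤ ∑ i, g (E / c i₀ * c i) :=
        Finset.single_le_sum (f := fun i => g (E / c i₀ * c i)) (fun i _ => (hg_mem _).1)
          (Finset.mem_univ i₀)
  have hκ0 : κ ≠ 0 := by
    rintro rfl
    simp [hg0] at hsum
  exact ⟨fun i => g (κ * c i), ⟨fun i => (hg_mem _).1, hsum⟩, κ, hκ.1.lt_of_ne' hκ0,
    funext fun i => hg_inv _ (hκc hκ i)⟩

theorem eq_of_movingMass_eq_smul {γ : ℝ} (hγ : γ ≤ 1) {c p q : ι → ℝ} (hc : ∀ i, 0 ≤ c i)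
    (hp : p ∈ stdSimplex ℝ ι) (hq : q ∈ stdSimplex ℝ ι) {s t : ℝ}
    (hps : movingMass γ p = s • c) (hqt : movingMass γ q = t • c) : p = q := by
  wlog hst : s ≤ t generalizing p q s t
  · exact (this hq hp hqt hps (le_of_not_ge hst)).symm
  have hle (i : ι) : p i ≤ q i := by
    refine ((strictMonoOn_mul_exp_neg_mul hγ).le_iff_le (mem_Icc_of_mem_stdSimplex hp i)
      (mem_Icc_of_mem_stdSimplex hq i)).1 ?_
    change movingMass γ p i ≤ movingMass γ q i
    rw [hps, hqt]
    exact mul_le_mul_of_nonneg_right hst (hc i)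
  funext i
  exact (Finset.sum_eq_sum_iff_of_le fun i _ => hle i).1 (hp.2.trans hq.2.symm) i
    (Finset.mem_univ i)

end

theorem stmt10_general (n : ℕ) (γ : ℝ) (hγ : γ ∈ Set.Ioc (0 : ℝ) 1)
    (C : Matrix (Fin n) (Fin n) ℝ)
    (hC0 : ∀ i j, 0 ≤ C i j)
    (hirr : ∀ i j, ∃ m : ℕ, 0 < m ∧ 0 < (C ^ m) i j)
    (c : Fin n → ℝ) (hc0 : ∀ i, 0 < c i) (hc1 : ∑ i, c i = 1)
    (hcC : Cᵀ.mulVec c = c)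
    (f : (Fin n → ℝ) → (Fin n → ℝ))
    (hf : ∀ p j, f p j = (1 - Real.exp (-(γ * p j))) * p j
        + ∑ i, C i j * (Real.exp (-(γ * p i)) * p i)) :
    ∃ p : Fin n → ℝ,
      ((∀ i, 0 ≤ p i) ∧ (∑ i, p i = 1) ∧ f p = p ∧
        ∃ κ : ℝ, 0 < κ ∧ ∀ i, p i * Real.exp (-(γ * p i)) = κ * c i) ∧
      ∀ q : Fin n → ℝ, (∀ i, 0 ≤ q i) → (∑ i, q i = 1) → f q = q → q = p := by
  obtain rfl : f = stepMap γ C := funext fun p => funext (hf p)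
  have : Nonempty (Fin n) := by
    by_contra h
    simp [not_nonempty_iff.1 h] at hc1
  have hC : C.IsIrreducible := (isIrreducible_iff_exists_pow_pos hC0).2 hirr
  rw [mulVec_transpose] at hcC
  obtain ⟨p, hp, κ, hκ, hpκ⟩ := exists_mem_stdSimplex_movingMass_eq_smul hγ.2 hc0
  have hfix : stepMap γ C p = p := stepMap_eq_self_iff.2 (by rw [hpκ, smul_vecMul, hcC])
  refine ⟨p, ⟨hp.1, hp.2, hfix, κ, hκ, fun i => congrFun hpκ i⟩, fun q hq0 hq1 hqfix => ?_⟩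
  obtain ⟨t, ht⟩ := hC.eq_smul_of_vecMul_eq_self hc0 hcC (stepMap_eq_self_iff.1 hqfix)
  exact eq_of_movingMass_eq_smul hγ.2 (fun i => (hc0 i).le) ⟨hq0, hq1⟩ hp ht hpκ

/-- For `γ ∈ (0,1]` and `C` irreducible row-stochastic with positive normalized left
Perron vector `c`, the map `f(p) = (diag(1 − e^{−γp}) + Cᵀ diag(e^{−γp})) p` has exactly
one fixed point `p⋆` in the probability simplex, characterized by
`p⋆ᵢ e^{−γ p⋆ᵢ} = κ cᵢ` for a suitable `κ > 0`. -/
theorem stmt10 (n : ℕ) (γ : ℝ) (hγ : γ ∈ Set.Ioc (0 : ℝ) 1)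
    (C : Matrix (Fin n) (Fin n) ℝ)
    (hC0 : ∀ i j, 0 ≤ C i j) (hC1 : ∀ i, ∑ j, C i j = 1)
    (hirr : ∀ i j, ∃ m : ℕ, 0 < m ∧ 0 < (C ^ m) i j)
    (c : Fin n → ℝ) (hc0 : ∀ i, 0 < c i) (hc1 : ∑ i, c i = 1)
    (hcC : Cᵀ.mulVec c = c)
    (f : (Fin n → ℝ) → (Fin n → ℝ))
    (hf : ∀ p j, f p j = (1 - Real.exp (-(γ * p j))) * p j
        + ∑ i, C i j * (Real.exp (-(γ * p i)) * p i)) :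
    ∃ p : Fin n → ℝ,
      ((∀ i, 0 ≤ p i) ∧ (∑ i, p i = 1) ∧ f p = p ∧
        ∃ κ : ℝ, 0 < κ ∧ ∀ i, p i * Real.exp (-(γ * p i)) = κ * c i) ∧
      ∀ q : Fin n → ℝ, (∀ i, 0 ≤ q i) → (∑ i, q i = 1) → f q = q → q = p :=
  stmt10_general n γ hγ C hC0 hirr c hc0 hc1 hcC f hf
end

section
/- Fix γ ∈ (0,1] and let C be a row-stochastic n×n matrix. The Jacobian of the map f(p) = (diag(e^{−γp}) + Cᵀ diag(1 − e^{−γp})) p at any probability vector p is the matrix Q(p)ᵀ = diag(e^{−γp} − γp⊙e^{−γp}) + Cᵀ diag(1 − e^{−γp} + γp⊙e^{−γp}), and this matrix is column-stochastic (nonnegative entries, columns summing to 1). -/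
/-! With `φ x = e^{-γx} x` and `ψ x = (1 - e^{-γx}) x`, the map is `q ↦ φ ∘ q + Cᵀ (ψ ∘ q)`, so its
Jacobian at `p` is `diag (φ' ∘ p) + Cᵀ diag (ψ' ∘ p)`. Since `φ' + ψ' = 1`, column `i` of this
matrix splits the mass `1` as `φ' (p i)` on the diagonal and `ψ' (p i)` spread along row `i` of
`C`; it is column-stochastic as soon as both parts are nonnegative, which holds because
`0 ≤ γ p i ≤ 1`. -/

open Matrix Finset

section Jacobian

variable {𝕜 ι : Type*} [NontriviallyNormedField 𝕜] [CompleteSpace 𝕜] [Fintype ι] [DecidableEq ι]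

theorem hasFDerivAt_comp_pointwise {φ : 𝕜 → 𝕜} {p a : ι → 𝕜}
    (hφ : ∀ i, HasDerivAt φ (a i) (p i)) :
    HasFDerivAt (fun q => φ ∘ q) (LinearMap.toContinuousLinearMap (toLin' (diagonal a))) p := by
  refine hasFDerivAt_pi'.2 fun i => ?_
  refine ((hφ i).comp_hasFDerivAt (f := fun q : ι → 𝕜 => q i) p
    (hasFDerivAt_apply i p)).congr_fderiv ?_
  ext v
  simp [mulVec_diagonal]

theorem hasFDerivAt_comp_add_transpose_mulVec_comp {φ ψ : 𝕜 → 𝕜} (C : Matrix ι ι 𝕜)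
    {p a b : ι → 𝕜} (hφ : ∀ i, HasDerivAt φ (a i) (p i)) (hψ : ∀ i, HasDerivAt ψ (b i) (p i)) :
    HasFDerivAt (fun q => φ ∘ q + Cᵀ *ᵥ (ψ ∘ q))
      (LinearMap.toContinuousLinearMap (toLin' (diagonal a + Cᵀ * diagonal b))) p := by
  have hCψ := (LinearMap.toContinuousLinearMap (toLin' Cᵀ)).hasFDerivAt.comp p
    (hasFDerivAt_comp_pointwise hψ)
  refine ((hasFDerivAt_comp_pointwise hφ).add hCψ).congr_fderiv ?_
  ext v
  simp [mulVec_mulVec]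

end Jacobian

section Stochastic

variable {R ι : Type*} [Fintype ι] [DecidableEq ι] [CommSemiring R] [PartialOrder R]
  [IsOrderedRing R]

theorem diagonal_add_transpose_mul_diagonal_mem_colStochastic {C : Matrix ι ι R}
    (hC : C ∈ rowStochastic R ι) {a b : ι → R} (ha : 0 ≤ a) (hb : 0 ≤ b) (hab : a + b = 1) :
    diagonal a + Cᵀ * diagonal b ∈ colStochastic R ι := by
  refine mem_colStochastic_iff_sum.2 ⟨fun j i => ?_, fun i => ?_⟩
  · rw [Matrix.add_apply, mul_diagonal, transpose_apply, diagonal_apply]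
    refine add_nonneg ?_ (mul_nonneg (nonneg_of_mem_rowStochastic hC) (hb i))
    split_ifs
    exacts [ha j, le_rfl]
  · simp only [Matrix.add_apply, mul_diagonal, transpose_apply, sum_add_distrib, diagonal_apply,
      sum_ite_eq', mem_univ, if_true, ← sum_mul, sum_row_of_mem_rowStochastic hC, one_mul]
    exact congrFun hab i

end Stochastic

open Real

theorem hasDerivAt_exp_neg_mul_mul (γ x : ℝ) :
    HasDerivAt (fun x => exp (-(γ * x)) * x) (exp (-(γ * x)) - γ * x * exp (-(γ * x))) x := by
  have h := (((hasDerivAt_id x).const_mul γ).fun_neg.exp).fun_mul (hasDerivAt_id x)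
  simp only [id_eq, mul_one] at h
  exact h.congr_deriv (by ring)

theorem hasDerivAt_one_sub_exp_neg_mul_mul (γ x : ℝ) :
    HasDerivAt (fun x => (1 - exp (-(γ * x))) * x)
      (1 - exp (-(γ * x)) + γ * x * exp (-(γ * x))) x := by
  have h := ((((hasDerivAt_id x).const_mul γ).fun_neg.exp).const_sub 1).fun_mul (hasDerivAt_id x)
  simp only [id_eq, mul_one] at h
  exact h.congr_deriv (by ring)

theorem exp_neg_sub_mul_exp_neg_nonneg {t : ℝ} (ht : t ≤ 1) : 0 ≤ exp (-t) - t * exp (-t) := by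
  nlinarith [exp_pos (-t)]

theorem one_sub_exp_neg_add_mul_exp_neg_nonneg {t : ℝ} (ht : 0 ≤ t) :
    0 ≤ 1 - exp (-t) + t * exp (-t) := by
  nlinarith [exp_pos (-t), exp_le_one_iff.2 (neg_nonpos.2 ht)]

/-- For `γ ∈ (0,1]` and `C` row-stochastic, the Jacobian of
`f(p) = (diag(e^{−γp}) + Cᵀ diag(1 − e^{−γp})) p` at a probability vector `p` is
`Q(p)ᵀ = diag(e^{−γp} − γp⊙e^{−γp}) + Cᵀ diag(1 − e^{−γp} + γp⊙e^{−γp})`,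
and this matrix is column-stochastic. -/
theorem stmt12 (n : ℕ) (γ : ℝ) (hγ : γ ∈ Set.Ioc (0 : ℝ) 1)
    (C : Matrix (Fin n) (Fin n) ℝ)
    (hC0 : ∀ i j, 0 ≤ C i j) (hC1 : ∀ i, ∑ j, C i j = 1)
    (f : (Fin n → ℝ) → (Fin n → ℝ))
    (hf : ∀ p j, f p j = Real.exp (-(γ * p j)) * p j
        + ∑ i, C i j * ((1 - Real.exp (-(γ * p i))) * p i))
    (p : Fin n → ℝ) (hp0 : ∀ i, 0 ≤ p i) (hp1 : ∑ i, p i = 1)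
    (M : Matrix (Fin n) (Fin n) ℝ)
    (hM : ∀ j i, M j i =
        (if j = i then Real.exp (-(γ * p i)) - γ * p i * Real.exp (-(γ * p i)) else 0)
        + C i j * (1 - Real.exp (-(γ * p i)) + γ * p i * Real.exp (-(γ * p i)))) :
    (∀ v : Fin n → ℝ, fderiv ℝ f p v = M.mulVec v) ∧
    (∀ j i, 0 ≤ M j i) ∧ (∀ i, ∑ j, M j i = 1) := by
  set a : Fin n → ℝ := fun i => exp (-(γ * p i)) - γ * p i * exp (-(γ * p i))
  set b : Fin n → ℝ := fun i => 1 - exp (-(γ * p i)) + γ * p i * exp (-(γ * p i))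
  have hM' : M = diagonal a + Cᵀ * diagonal b := by
    ext j i
    rw [hM, Matrix.add_apply, mul_diagonal, diagonal_apply]
    split_ifs with h <;> simp [h, a, b]
  have hf' : f = fun q => (fun x => exp (-(γ * x)) * x) ∘ q
      + Cᵀ *ᵥ ((fun x => (1 - exp (-(γ * x))) * x) ∘ q) := by
    ext q j
    simp [hf, mulVec, dotProduct]
  have hγp : ∀ i, 0 ≤ γ * p i ∧ γ * p i ≤ 1 := fun i =>
    ⟨mul_nonneg hγ.1.le (hp0 i), mul_le_one₀ hγ.2 (hp0 i)
      (hp1 ▸ single_le_sum (fun k _ => hp0 k) (mem_univ i))⟩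
  have hMst : M ∈ colStochastic ℝ (Fin n) := hM' ▸
    diagonal_add_transpose_mul_diagonal_mem_colStochastic (mem_rowStochastic_iff_sum.2 ⟨hC0, hC1⟩)
      (fun i => exp_neg_sub_mul_exp_neg_nonneg (hγp i).2)
      (fun i => one_sub_exp_neg_add_mul_exp_neg_nonneg (hγp i).1)
      (funext fun i => by simp only [Pi.add_apply, Pi.one_apply, a, b]; ring)
  refine ⟨fun v => ?_, fun j i => nonneg_of_mem_colStochastic hMst,
    sum_col_of_mem_colStochastic hMst⟩
  rw [hf', (hasFDerivAt_comp_add_transpose_mulVec_comp C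
    (fun i => hasDerivAt_exp_neg_mul_mul γ (p i))
    (fun i => hasDerivAt_one_sub_exp_neg_mul_mul γ (p i))).fderiv, hM']
  rfl
end
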